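/- If all vectors f(x_i), f(x_i^+) are unit vectors, the InfoNCE loss is lower bounded by ∑_{i=1}^m ( log(m-1) + ‖f(x_i)-f(x_i^+)‖²/(2τ) - (1/(m-1)) ∑_{j≠i} ‖f(x_i)-f(x_j^+)‖²/(2τ) ). -/

import Mathlib

/-!
For unit vectors `‖u - v‖² / 2 = 1 - ⟪u, v⟫`, so the distance terms of the bound are affine in the
similarities `b j = ⟪f i, g j⟫ / τ`, and each summand reduces to
`log (m - 1) + mean_{j ≠ i} b j ≤ log ∑_{j ≠ i} exp (b j)`, i.e. Jensen's inequality for `exp`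
applied to the uniform average over the `m - 1` negatives.
-/

open Finset Real

theorem Real.log_card_add_mean_le_log_sum_exp {ι : Type*} {s : Finset ι} (hs : s.Nonempty)
    (b : ι → ℝ) :
    log #s + (#s : ℝ)⁻¹ * ∑ j ∈ s, b j ≤ log (∑ j ∈ s, exp (b j)) := by
  have hcard : (0 : ℝ) < #s := by exact_mod_cast hs.card_pos
  have jensen : exp ((#s : ℝ)⁻¹ * ∑ j ∈ s, b j) ≤ (#s : ℝ)⁻¹ * ∑ j ∈ s, exp (b j) := by
    simpa only [mul_sum, smul_eq_mul] using
      convexOn_exp.map_sum_le (t := s) (w := fun _ => (#s : ℝ)⁻¹) (p := b)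
        (fun _ _ => by positivity) (by simp [hcard.ne']) (fun _ _ => Set.mem_univ _)
  have hsum : 0 < ∑ j ∈ s, exp (b j) := sum_pos (fun _ _ => exp_pos _) hs
  have := log_le_log (exp_pos _) jensen
  rw [log_exp, log_mul (by positivity) hsum.ne', log_inv] at this
  linarith

theorem norm_sub_sq_div_two_eq_one_sub_inner {E : Type*} [NormedAddCommGroup E] [InnerProductSpace ℝ E]
    {u v : E} (hu : ‖u‖ = 1) (hv : ‖v‖ = 1) :
    ‖u - v‖ ^ 2 / 2 = 1 - inner ℝ u v := by
  rw [norm_sub_sq_real, hu, hv]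
  ring

theorem log_card_add_sub_mean_le_neg_log_softmax {ι E : Type*} [NormedAddCommGroup E]
    [InnerProductSpace ℝ E] {s : Finset ι} (hs : s.Nonempty) (τ : ℝ) (u : E) (v : ι → E)
    (hu : ‖u‖ = 1) (hv : ∀ j, ‖v j‖ = 1) (i : ι) :
    log #s + ‖u - v i‖ ^ 2 / (2 * τ) - (#s : ℝ)⁻¹ * ∑ j ∈ s, ‖u - v j‖ ^ 2 / (2 * τ) ≤
      -log (exp (inner ℝ u (v i) / τ) / ∑ j ∈ s, exp (inner ℝ u (v j) / τ)) := by
  set b : ι → ℝ := fun j => inner ℝ u (v j) / τ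
  have hdist : ∀ j, ‖u - v j‖ ^ 2 / (2 * τ) = τ⁻¹ - b j := fun j => by
    rw [← div_div, norm_sub_sq_div_two_eq_one_sub_inner hu (hv j)]
    ring
  have hcard : (#s : ℝ) ≠ 0 := by exact_mod_cast hs.card_pos.ne'
  have hmean : (#s : ℝ)⁻¹ * ∑ j ∈ s, (τ⁻¹ - b j) = τ⁻¹ - (#s : ℝ)⁻¹ * ∑ j ∈ s, b j := by
    rw [sum_sub_distrib, sum_const, nsmul_eq_mul, mul_sub, inv_mul_cancel_left₀ hcard]
  have hsum : 0 < ∑ j ∈ s, exp (b j) := sum_pos (fun _ _ => exp_pos _) hs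
  simp only [hdist, hmean]
  rw [log_div (exp_pos _).ne' hsum.ne', log_exp]
  linarith [log_card_add_mean_le_log_sum_exp hs b]

theorem stmt_3_general {m Z : ℕ} (hm : 2 ≤ m) {τ : ℝ}
    (f g : Fin m → EuclideanSpace ℝ (Fin Z))
    (hf : ∀ i, ‖f i‖ = 1) (hg : ∀ i, ‖g i‖ = 1) :
    -∑ i, Real.log (Real.exp ((inner ℝ (f i) (g i) : ℝ) / τ) /
        ∑ j ∈ Finset.univ \ {i}, Real.exp ((inner ℝ (f i) (g j) : ℝ) / τ)) ≥
      ∑ i, (Real.log ((m : ℝ) - 1) + ‖f i - g i‖ ^ 2 / (2 * τ) -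
        (1 / ((m : ℝ) - 1)) *
          ∑ j ∈ Finset.univ \ {i}, ‖f i - g j‖ ^ 2 / (2 * τ)) := by
  rw [ge_iff_le, ← sum_neg_distrib]
  refine sum_le_sum fun i _ => ?_
  have hcard : #(univ \ {i}) = m - 1 := by rw [card_univ_sdiff]; simp
  have hne : (univ \ {i}).Nonempty := by rw [← card_pos, hcard]; omega
  have := log_card_add_sub_mean_le_neg_log_softmax hne τ (f i) g (hf i) hg i
  rwa [hcard, Nat.cast_sub (by omega), Nat.cast_one, ← one_div] at this

theorem stmt_3 {m Z : ℕ} (hm : 2 ≤ m) {τ : ℝ} (hτ : 0 < τ)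
    (f g : Fin m → EuclideanSpace ℝ (Fin Z))
    (hf : ∀ i, ‖f i‖ = 1) (hg : ∀ i, ‖g i‖ = 1) :
    -∑ i, Real.log (Real.exp ((inner ℝ (f i) (g i) : ℝ) / τ) /
        ∑ j ∈ Finset.univ \ {i}, Real.exp ((inner ℝ (f i) (g j) : ℝ) / τ)) ≥
      ∑ i, (Real.log ((m : ℝ) - 1) + ‖f i - g i‖ ^ 2 / (2 * τ) -
        (1 / ((m : ℝ) - 1)) *
          ∑ j ∈ Finset.univ \ {i}, ‖f i - g j‖ ^ 2 / (2 * τ)) :=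
  stmt_3_general hm f g hf hg
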